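/- Let G be a connected bipartite graph with colour classes V and E, equipped with a total order on E, and f a hypertree. A hyperedge e ∈ E is internally inactive with respect to f if and only if f(e) ≠ 0 and there exists a hyperedge e' < e such that every subset E' ⊆ E containing e' and not containing e is not tight at f. -/

import Mathlib

open SimpleGraph

variable {V E : Type*}

/-- The bipartite graph on `V ⊕ E` determined by the incidence relation `r`. -/
def BipGraph (r : V → E → Prop) : SimpleGraph (V ⊕ E) where
  Adj x y := (∃ v e, x = Sum.inl v ∧ y = Sum.inr e ∧ r v e) ∨
             (∃ v e, x = Sum.inr e ∧ y = Sum.inl v ∧ r v e)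
  symm := ⟨by
    rintro x y (⟨v, e, rfl, rfl, h⟩ | ⟨v, e, rfl, rfl, h⟩)
    · exact Or.inr ⟨v, e, rfl, rfl, h⟩
    · exact Or.inl ⟨v, e, rfl, rfl, h⟩⟩
  loopless := ⟨by
    rintro x (⟨v, e, rfl, h, _⟩ | ⟨v, e, rfl, h, _⟩) <;> simp_all⟩

/-- `τ` is a spanning tree of `G`. -/
def IsSpanningTree {α : Type*} (G τ : SimpleGraph α) : Prop :=
  τ ≤ G ∧ τ.Connected ∧ τ.IsAcyclic

/-- A hypertree of the hypergraph induced by the bipartite graph `BipGraph r`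
(with `E` the set of hyperedges): a function realized by a spanning tree. -/
def IsHypertree (r : V → E → Prop) (f : E → ℕ) : Prop :=
  ∃ τ : SimpleGraph (V ⊕ E), IsSpanningTree (BipGraph r) τ ∧
    ∀ e : E, (τ.neighborSet (Sum.inr e)).ncard = f e + 1

/-- The restriction of a graph `H` on `V ⊕ E` (typically a subgraph of `BipGraph r`)
to the hyperedge set `A` together with all `V`-vertices incident (in `G`) to `A`. -/
def BipRestrict (r : V → E → Prop) (H : SimpleGraph (V ⊕ E)) (A : Set E) :
    SimpleGraph ({v : V // ∃ e ∈ A, r v e} ⊕ A) where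
  Adj x y := H.Adj (Sum.elim (fun v => Sum.inl v.1) (fun e => Sum.inr e.1) x)
               (Sum.elim (fun v => Sum.inl v.1) (fun e => Sum.inr e.1) y)
  symm := ⟨fun _ _ h => H.adj_symm h⟩
  loopless := ⟨by
    rintro (v | e) h <;> exact H.irrefl h⟩

/-- `μ(A) = |⋃A| - c(A)`. -/
noncomputable def mu (r : V → E → Prop) (A : Set E) : ℕ :=
  Nat.card {v : V // ∃ e ∈ A, r v e} -
    Nat.card (BipRestrict r (BipGraph r) A).ConnectedComponent

/-- `A` is tight at `f`. -/
noncomputable def Tight (r : V → E → Prop) (f : E → ℕ) (A : Finset E) : Prop :=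
  ∑ e ∈ A, f e = mu r (↑A : Set E)

open Classical in
/-- The function obtained from `f` by decreasing `f e` by one and increasing `f e'` by one. -/
noncomputable def Transfer (f : E → ℕ) (e e' : E) : E → ℕ :=
  fun x => if x = e then f e - 1 else if x = e' then f e' + 1 else f x

/-- The internal inactivity of `f`: the number of internally inactive hyperedges. -/
noncomputable def intInact (r : V → E → Prop) [LT E] (f : E → ℕ) : ℕ :=
  Nat.card {e : E // ∃ e', e' < e ∧ IsHypertree r (Transfer f e e')}

/-- The external inactivity of `f`: the number of externally inactive hyperedges. -/
noncomputable def extInact (r : V → E → Prop) [LT E] (f : E → ℕ) : ℕ :=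
  Nat.card {e : E // ∃ e', e' < e ∧ IsHypertree r (Transfer f e' e)}

/-- The interior polynomial `I_G(x) = ∑_f x^{ῑ(f)}`. -/
noncomputable def interiorPoly (r : V → E → Prop) [Fintype E] [LT E] : Polynomial ℤ :=
  ∑ i ∈ Finset.range (Fintype.card E + 1),
    Polynomial.C ((Nat.card {f : E → ℕ // IsHypertree r f ∧ intInact r f = i} : ℕ) : ℤ) *
      Polynomial.X ^ i

/-- The exterior polynomial `X_G(y) = ∑_f y^{ε̄(f)}`. -/
noncomputable def exteriorPoly (r : V → E → Prop) [Fintype E] [LT E] : Polynomial ℤ :=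
  ∑ i ∈ Finset.range (Fintype.card E + 1),
    Polynomial.C ((Nat.card {f : E → ℕ // IsHypertree r f ∧ extInact r f = i} : ℕ) : ℤ) *
      Polynomial.X ^ i

/-!
A spanning tree `τ` realizing `f`, restricted to the hyperedges of `A` and their neighbours, is a
forest with `∑_{a ∈ A} (f a + 1)` edges on `|⋃A| + |A|` vertices, and it has at least as many
components as `G` restricted to `A`; hence `∑_A f ≤ μ(A)`, with equality when the restricted forest
is connected. So moving a unit from `e` to `e'` cannot give a hypertree if some tight set contains
`e'` but not `e`, nor if `f e = 0`, because `∑_E f = |V| - 1` for every hypertree.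

Conversely, let `B` be the branch of `τ` at `e` containing `e'`. If every neighbour of a hyperedge
of `B` lies in `B`, the hyperedges of `B` form a tight set. Otherwise some hyperedge `a` of `B` has
a neighbour `v` outside `B`, and adding the edge `va` to `τ` closes a cycle through `e`. If `a` lies
on the path from `e'` to `e`, dropping the edge of that cycle at `e` realizes `f` with a unit moved
from `e` to `a`, and the branch at `a` containing `e'` is smaller than `B`; otherwise dropping the
edge of the cycle at `a` realizes `f` itself with a smaller `B`. Induction on `|B|` concludes, since
a tight set of the shifted function that avoids `a` is tight for `f`.
-/

open Sum

namespace SimpleGraph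

variable {W : Type*} {G H : SimpleGraph W} {s t u v w a x y p q z : W}

lemma deleteIncidenceSet_mono (h : H ≤ G) (t : W) :
    H.deleteIncidenceSet t ≤ G.deleteIncidenceSet t := fun a b hab => by
  rw [deleteIncidenceSet_adj] at hab ⊢
  exact ⟨h hab.1, hab.2⟩

lemma deleteIncidenceSet_le_deleteEdges : G.deleteIncidenceSet x ≤ G.deleteEdges {s(x, y)} :=
  fun a b hab => by
    rw [deleteIncidenceSet_adj] at hab
    simp only [deleteEdges_adj, Set.mem_singleton_iff, Sym2.eq_iff]
    grind

lemma deleteIncidenceSet_le_of_le_sup_edge (h : H ≤ G ⊔ edge p q) :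
    H.deleteIncidenceSet q ≤ G.deleteIncidenceSet q := fun a b hab => by
  rw [deleteIncidenceSet_adj] at hab ⊢
  obtain ⟨hab, ha, hb⟩ := hab
  rcases h hab with hab | hab
  · exact ⟨hab, ha, hb⟩
  · rw [edge_adj] at hab
    grind

lemma reachable_deleteIncidenceSet_self_iff :
    (G.deleteIncidenceSet t).Reachable t z ↔ t = z := by
  refine ⟨fun ⟨w⟩ => ?_, fun h => h ▸ .rfl⟩
  cases w with
  | nil => rfl
  | cons h _ => exact absurd rfl (deleteIncidenceSet_adj.mp h).2.1

lemma Walk.reachable_deleteIncidenceSet_of_notMem_support (w : G.Walk u v) (ht : t ∉ w.support) :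
    (G.deleteIncidenceSet t).Reachable u v :=
  ⟨w.toDeleteEdges _ fun _ he hinc =>
    ht (Walk.mem_support_iff_exists_mem_edges.mpr (.inr ⟨_, he, hinc.2⟩))⟩

lemma Reachable.deleteIncidenceSet_or (h : G.Reachable u v) (t : W) :
    (G.deleteIncidenceSet t).Reachable u v ∨ G.Reachable u t ∧ G.Reachable t v := by
  classical
  obtain ⟨w⟩ := h
  by_cases ht : t ∈ w.support
  · exact .inr ⟨⟨w.takeUntil t ht⟩, ⟨w.dropUntil t ht⟩⟩
  · exact .inl (w.reachable_deleteIncidenceSet_of_notMem_support ht)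

lemma Reachable.exists_adj_deleteIncidenceSet (h : G.Reachable u v) (huv : u ≠ v) :
    ∃ w, G.Adj u w ∧ (G.deleteIncidenceSet u).Reachable w v := by
  classical
  obtain ⟨p, hp⟩ := h.some.toPath
  cases p with
  | nil => exact absurd rfl huv
  | cons hadj q =>
    exact ⟨_, hadj,
      q.reachable_deleteIncidenceSet_of_notMem_support ((Walk.cons_isPath_iff _ _).mp hp).2⟩

lemma Reachable.deleteEdges_or (h : G.Reachable z x) (y : W) :
    (G.deleteEdges {s(x, y)}).Reachable z x ∨ (G.deleteEdges {s(x, y)}).Reachable z y := by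
  obtain ⟨w⟩ := h
  induction w with
  | nil => exact .inl .rfl
  | @cons a b c hab _ ih =>
    by_cases he : s(a, b) = s(c, y)
    · rcases Sym2.eq_iff.mp he with ⟨rfl, -⟩ | ⟨rfl, -⟩
      · exact .inl .rfl
      · exact .inr .rfl
    · have hab' : (G.deleteEdges {s(c, y)}).Adj a b := by simp [hab, he]
      exact ih.imp hab'.reachable.trans hab'.reachable.trans

lemma IsAcyclic.not_reachable_deleteEdges (hG : G.IsAcyclic) (h : G.Adj x y) :
    ¬(G.deleteEdges {s(x, y)}).Reachable x y :=
  isBridge_iff.mp (isAcyclic_iff_forall_adj_isBridge.mp hG h)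

lemma Connected.sup_edge_deleteEdges (hG : G.Connected)
    (hpq : ¬(G.deleteEdges {s(x, y)}).Reachable p q) :
    (G.deleteEdges {s(x, y)} ⊔ edge p q).Connected := by
  set G' := G.deleteEdges {s(x, y)}
  have hle : G' ≤ G' ⊔ edge p q := le_sup_left
  have side (z : W) : G'.Reachable z x ∨ G'.Reachable z y :=
    (hG.preconnected z x).deleteEdges_or y
  have hne : p ≠ q := by rintro rfl; exact hpq .rfl
  have hpq' : (G' ⊔ edge p q).Reachable p q :=
    (Adj.reachable (by simp [edge_adj, hne])).mono le_sup_right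
  have hxy : (G' ⊔ edge p q).Reachable x y := by
    rcases side p with hp | hp <;> rcases side q with hq | hq
    · exact absurd (hp.trans hq.symm) hpq
    · exact ((hp.mono hle).symm.trans hpq').trans (hq.mono hle)
    · exact ((hq.mono hle).symm.trans hpq'.symm).trans (hp.mono hle)
    · exact absurd (hp.trans hq.symm) hpq
  refine (connected_iff_exists_forall_reachable _).mpr ⟨x, fun z => ?_⟩
  rcases side z with hz | hz
  · exact (hz.mono hle).symm
  · exact hxy.trans (hz.mono hle).symm

lemma ncard_neighborSet_deleteEdges_add [Finite W] [DecidableEq W] (h : G.Adj x y) (z : W) :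
    ((G.deleteEdges {s(x, y)}).neighborSet z).ncard + (if z ∈ s(x, y) then 1 else 0) =
      (G.neighborSet z).ncard := by
  split_ifs with hz
  · obtain ⟨w, hw⟩ := Sym2.mem_iff_exists.mp hz
    rw [← mem_edgeSet, hw, mem_edgeSet] at h
    have : G.neighborSet z = insert w ((G.deleteEdges {s(x, y)}).neighborSet z) := by
      ext u
      simp only [mem_neighborSet, deleteEdges_adj, Set.mem_insert_iff, Set.mem_singleton_iff, hw]
      grind
    rw [this, Set.ncard_insert_of_notMem (by simp [hw])]
  · rw [add_zero]
    congr 1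
    ext u
    simp only [mem_neighborSet, deleteEdges_adj, Set.mem_singleton_iff, and_iff_left_iff_imp]
    exact fun _ he => hz (he ▸ Sym2.mem_mk_left z u)

lemma ncard_neighborSet_sup_edge [Finite W] [DecidableEq W] (h : ¬G.Adj p q) (hpq : p ≠ q)
    (z : W) :
    ((G ⊔ edge p q).neighborSet z).ncard =
      (G.neighborSet z).ncard + (if z ∈ s(p, q) then 1 else 0) := by
  split_ifs with hz
  · obtain ⟨w, hw⟩ := Sym2.mem_iff_exists.mp hz
    have hne : z ≠ w := by rintro rfl; grind
    rw [← mem_edgeSet, hw, mem_edgeSet] at h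
    have : (G ⊔ edge p q).neighborSet z = insert w (G.neighborSet z) := by
      ext u
      simp only [mem_neighborSet, sup_adj, adj_edge, Set.mem_insert_iff, hw]
      grind
    rw [this, Set.ncard_insert_of_notMem (by simpa using h)]
  · rw [add_zero]
    congr 1
    ext u
    simp only [mem_neighborSet, sup_adj, adj_edge, or_iff_left_iff_imp]
    exact fun he => absurd (he.1 ▸ Sym2.mem_mk_left z u) hz

lemma card_connectedComponent_lt_deleteEdges [Finite W] (h : G.Adj x y)
    (hxy : ¬(G.deleteEdges {s(x, y)}).Reachable x y) :
    Nat.card G.ConnectedComponent < Nat.card (G.deleteEdges {s(x, y)}).ConnectedComponent := by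
  have := Fintype.ofFinite W
  classical
  have hle : G.deleteEdges {s(x, y)} ≤ G := deleteEdges_le _
  simp only [Nat.card_eq_fintype_card]
  refine Fintype.card_lt_of_surjective_not_injective _
    (ConnectedComponent.surjective_map_ofLE hle) fun hinj => hxy ?_
  exact ConnectedComponent.exact (hinj (ConnectedComponent.sound h.reachable))

theorem IsAcyclic.ncard_edgeSet_add_card_connectedComponent_le [Finite W] (hG : G.IsAcyclic) :
    G.edgeSet.ncard + Nat.card G.ConnectedComponent ≤ Nat.card W := by
  induction hn : G.edgeSet.ncard generalizing G with
  | zero =>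
    simpa using Nat.card_le_card_of_surjective _ fun c : G.ConnectedComponent => c.exists_rep
  | succ n ih =>
    obtain ⟨e, he⟩ := Set.nonempty_of_ncard_ne_zero (s := G.edgeSet) (by omega)
    induction e using Sym2.ind with | _ x y => ?_
    rw [mem_edgeSet] at he
    have hlt := card_connectedComponent_lt_deleteEdges he (hG.not_reachable_deleteEdges he)
    have := ih (hG.anti (deleteEdges_le _))
      (by rw [edgeSet_deleteEdges, Set.ncard_sdiff_singleton_of_mem (G.mem_edgeSet.mpr he), hn,
        Nat.add_sub_cancel])
    omega

lemma Embedding.ncard_neighborSet {W' : Type*} {G' : SimpleGraph W'} (φ : G ↪g G') (v : W)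
    (h : G'.neighborSet (φ v) ⊆ Set.range φ) :
    (G.neighborSet v).ncard = (G'.neighborSet (φ v)).ncard := by
  rw [← Set.ncard_image_of_injective _ φ.injective]
  congr 1
  ext w
  refine ⟨fun ⟨u, hu, hw⟩ => hw ▸ φ.map_adj_iff.mpr hu, fun hw => ?_⟩
  obtain ⟨u, rfl⟩ := h hw
  exact ⟨u, φ.map_adj_iff.mp hw, rfl⟩

lemma IsBipartiteWith.ncard_edgeSet_eq_sum_inr {β γ : Type*} [Fintype β] [Fintype γ]
    {G : SimpleGraph (β ⊕ γ)} (h : G.IsBipartiteWith (Set.range Sum.inl) (Set.range Sum.inr)) :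
    G.edgeSet.ncard = ∑ c, (G.neighborSet (Sum.inr c)).ncard := by
  classical
  have hsum := isBipartiteWith_sum_degrees_eq_card_edges'
    (s := Finset.univ.map .inl) (t := Finset.univ.map .inr) (by simpa using h)
  rw [Finset.sum_map] at hsum
  rw [Set.ncard_eq_toFinset_card', ← edgeFinset, ← hsum]
  refine Finset.sum_congr rfl fun c _ => ?_
  rw [← card_neighborSet_eq_degree, ← Nat.card_eq_fintype_card, Nat.card_coe_set_eq]
  rfl

lemma IsBipartiteWith.anti {S T : Set W} (h : G.IsBipartiteWith S T) (hle : H ≤ G) :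
    H.IsBipartiteWith S T :=
  ⟨h.disjoint, fun _ _ hadj => h.mem_of_adj (hle hadj)⟩

lemma deleteIncidenceSet_comm (x y : W) :
    (G.deleteIncidenceSet x).deleteIncidenceSet y =
      (G.deleteIncidenceSet y).deleteIncidenceSet x := by
  ext
  simp only [deleteIncidenceSet_adj]
  tauto

def branch (G : SimpleGraph W) (t s : W) : Set W := {z | (G.deleteIncidenceSet t).Reachable s z}

lemma mem_branch {z : W} : z ∈ G.branch t s ↔ (G.deleteIncidenceSet t).Reachable s z := Iff.rfl

lemma ne_of_mem_branch {z : W} (hz : z ∈ G.branch t s) (hst : s ≠ t) : z ≠ t := by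
  rintro rfl
  exact hst (reachable_deleteIncidenceSet_self_iff.mp hz.symm).symm

lemma branch_subset (hle : (H.deleteIncidenceSet u).deleteIncidenceSet t ≤ G.deleteIncidenceSet t)
    (hu : u ∉ H.branch t s) : H.branch t s ⊆ G.branch t s := fun z hz => by
  rcases hz.deleteIncidenceSet_or u with h | ⟨h, -⟩
  · exact h.mono (by rwa [deleteIncidenceSet_comm])
  · exact absurd h hu

lemma branch_swap_ssubset (hG : G.IsAcyclic) (haw : G.Adj a w)
    (hwt : (G.deleteIncidenceSet a).Reachable w t) (hst : (G.deleteIncidenceSet a).Reachable s t)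
    (ha : a ∈ G.branch t s) (hv : v ∉ G.branch t s) :
    (G.deleteEdges {s(a, w)} ⊔ edge v a).branch t s ⊂ G.branch t s := by
  set H := G.deleteEdges {s(a, w)} ⊔ edge v a
  have hK : (H.deleteIncidenceSet t).deleteEdges {s(a, v)} ≤
      (G.deleteEdges {s(a, w)}).deleteIncidenceSet t := fun x y hxy => by
    simp only [H, deleteEdges_adj, deleteIncidenceSet_adj, sup_adj, edge_adj,
      Set.mem_singleton_iff, Sym2.eq_iff] at hxy ⊢
    grind
  have haH : a ∉ H.branch t s := fun h => by
    rcases h.deleteEdges_or v with h | h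
    · refine hG.not_reachable_deleteEdges haw ?_
      have hle := deleteIncidenceSet_le_deleteEdges (G := G) (x := a) (y := w)
      exact (h.mono (hK.trans (deleteIncidenceSet_le _ _))).symm.trans
        ((hst.mono hle).trans (hwt.mono hle).symm)
    · exact hv (h.mono (hK.trans (deleteIncidenceSet_mono (deleteEdges_le _) t)))
  refine (branch_subset ?_ haH).ssubset_of_ne fun h => haH (h ▸ ha)
  exact deleteIncidenceSet_mono ((deleteIncidenceSet_le_of_le_sup_edge
    (sup_le_sup_right (deleteEdges_le _) _)).trans (deleteIncidenceSet_le _ _)) t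

lemma branch_shift_ssubset {H : SimpleGraph W} (hH : H ≤ G ⊔ edge v a)
    (hst : ¬(G.deleteIncidenceSet a).Reachable s t) (ha : a ∈ G.branch t s) (has : a ≠ s) :
    H.branch a s ⊂ G.branch t s := by
  have hle := deleteIncidenceSet_le_of_le_sup_edge hH
  have hsub : H.branch a s ⊆ G.branch t s := fun z hz => by
    rcases hz.deleteIncidenceSet_or t with h | ⟨h, -⟩
    · exact h.mono (deleteIncidenceSet_mono (hle.trans (deleteIncidenceSet_le _ _)) t)
    · exact absurd (h.mono hle) hst
  exact hsub.ssubset_of_ne fun h => ne_of_mem_branch (h ▸ ha : a ∈ H.branch a s) has.symm rfl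

lemma IsAcyclic.not_reachable_deleteEdges_at_root (hG : G.IsAcyclic) (hx : G.Adj t x)
    (hxv : (G.deleteIncidenceSet t).Reachable x v) (ha : a ∈ G.branch t s)
    (hv : v ∉ G.branch t s) : ¬(G.deleteEdges {s(t, x)}).Reachable v a := fun hva => by
  rcases hva.deleteIncidenceSet_or t with h | ⟨hvt, -⟩
  · exact hv (ha.trans (h.mono (deleteIncidenceSet_mono (deleteEdges_le _) t)).symm)
  · exact hG.not_reachable_deleteEdges hx
      ((hxv.mono deleteIncidenceSet_le_deleteEdges).trans hvt).symm

lemma IsAcyclic.not_reachable_deleteEdges_toward_root (hG : G.IsAcyclic) (haw : G.Adj a w)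
    (hwt : (G.deleteIncidenceSet a).Reachable w t) (ha : a ∈ G.branch t s)
    (hv : v ∉ G.branch t s) : ¬(G.deleteEdges {s(a, w)}).Reachable v a := fun hva => by
  rcases hva.deleteIncidenceSet_or t with h | ⟨-, hta⟩
  · exact hv (ha.trans (h.mono (deleteIncidenceSet_mono (deleteEdges_le _) t)).symm)
  · exact hG.not_reachable_deleteEdges haw
      ((hwt.mono deleteIncidenceSet_le_deleteEdges).trans hta).symm

end SimpleGraph

section Transfer

variable {E : Type*} {f : E → ℕ} {e e' a : E}

lemma transfer_apply_right (hae : a ≠ e) : Transfer f e a a = f a + 1 := by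
  simp [Transfer, hae]

lemma transfer_add_ite [DecidableEq E] (hea : e ≠ a) (hfe : f e ≠ 0) (b : E) :
    Transfer f e a b + (if b = e then 1 else 0) = f b + (if b = a then 1 else 0) := by
  unfold Transfer
  split_ifs <;> grind

lemma sum_transfer_add_ite [DecidableEq E] (hea : e ≠ a) (hfe : f e ≠ 0) (A : Finset E) :
    ∑ x ∈ A, Transfer f e a x + (if e ∈ A then 1 else 0) =
      ∑ x ∈ A, f x + (if a ∈ A then 1 else 0) := by
  have := Finset.sum_congr rfl fun b (_ : b ∈ A) => transfer_add_ite hea hfe b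
  simpa [Finset.sum_add_distrib, Finset.sum_ite_eq'] using this

lemma sum_lt_sum_transfer [Fintype E] (hee' : e ≠ e') (hfe : f e = 0) :
    ∑ x, f x < ∑ x, Transfer f e e' x :=
  Finset.sum_lt_sum (fun x _ => by unfold Transfer; split_ifs <;> subst_vars <;> omega)
    ⟨e', Finset.mem_univ _, by rw [transfer_apply_right hee'.symm]; omega⟩

lemma transfer_transfer (hea : e ≠ a) (hae' : a ≠ e') (hee' : e ≠ e') :
    Transfer (Transfer f e a) a e' = Transfer f e e' := by
  funext x
  unfold Transfer
  split_ifs <;> grind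

end Transfer

section Realization

variable {V E : Type*} {r : V → E → Prop}

lemma bipGraph_adj_inl_inr {v : V} {a : E} : (BipGraph r).Adj (inl v) (inr a) ↔ r v a := by
  simp [BipGraph]

lemma exists_eq_inl_of_bipGraph_adj {a : E} {z : V ⊕ E} (h : (BipGraph r).Adj (inr a) z) :
    ∃ v, z = inl v ∧ r v a := by
  rcases h with ⟨_, _, h, -⟩ | ⟨v, _, h, rfl, hr⟩
  · exact absurd h inr_ne_inl
  · exact ⟨v, rfl, inr_injective h ▸ hr⟩

lemma exists_eq_inr_of_bipGraph_adj {v : V} {z : V ⊕ E} (h : (BipGraph r).Adj (inl v) z) :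
    ∃ a, z = inr a ∧ r v a := by
  rcases h with ⟨_, a, h, rfl, hr⟩ | ⟨_, _, h, -⟩
  · exact ⟨a, rfl, inl_injective h ▸ hr⟩
  · exact absurd h inl_ne_inr

lemma bipGraph_isBipartiteWith :
    (BipGraph r).IsBipartiteWith (Set.range inl) (Set.range inr) where
  disjoint := Set.isCompl_range_inl_range_inr.disjoint
  mem_of_adj := by rintro _ _ (⟨v, a, rfl, rfl, -⟩ | ⟨v, a, rfl, rfl, -⟩) <;> simp

def IsRealization (r : V → E → Prop) (f : E → ℕ) (τ : SimpleGraph (V ⊕ E)) : Prop :=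
  IsSpanningTree (BipGraph r) τ ∧ ∀ e, (τ.neighborSet (inr e)).ncard = f e + 1

lemma isHypertree_iff {f : E → ℕ} : IsHypertree r f ↔ ∃ τ, IsRealization r f τ := Iff.rfl

def bipRestrictEmbedding (r : V → E → Prop) (H : SimpleGraph (V ⊕ E)) (A : Set E) :
    BipRestrict r H A ↪g H :=
  Embedding.comap ((Function.Embedding.subtype _).sumMap (Function.Embedding.subtype _)) H

@[simp] lemma bipRestrictEmbedding_apply {H : SimpleGraph (V ⊕ E)} {A : Set E}
    (x : {v : V // ∃ e ∈ A, r v e} ⊕ A) :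
    bipRestrictEmbedding r H A x = Sum.map Subtype.val Subtype.val x := rfl

@[simp] lemma inl_mem_range_bipRestrictEmbedding {H : SimpleGraph (V ⊕ E)} {A : Set E} {v : V} :
    inl v ∈ Set.range (bipRestrictEmbedding r H A) ↔ ∃ e ∈ A, r v e := by
  simp [Sum.exists]

@[simp] lemma inr_mem_range_bipRestrictEmbedding {H : SimpleGraph (V ⊕ E)} {A : Set E} {a : E} :
    inr a ∈ Set.range (bipRestrictEmbedding r H A) ↔ a ∈ A := by
  simp [Sum.exists]

lemma bipRestrict_mono {H K : SimpleGraph (V ⊕ E)} (h : H ≤ K) (A : Set E) :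
    BipRestrict r H A ≤ BipRestrict r K A := fun _ _ hxy => h hxy

lemma bipRestrict_isBipartiteWith {H : SimpleGraph (V ⊕ E)} (hH : H ≤ BipGraph r) (A : Set E) :
    (BipRestrict r H A).IsBipartiteWith (Set.range inl) (Set.range inr) := by
  refine ⟨Set.isCompl_range_inl_range_inr.disjoint, ?_⟩
  rintro (x | x) (y | y) hxy <;> simp
  all_goals exact absurd (hH hxy) (by simp [BipGraph])

lemma connected_bipRestrict_of_range_eq {H τ : SimpleGraph (V ⊕ E)} {A : Set E} (hH : H ≤ τ)
    (z : V ⊕ E)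
    (hrange : Set.range (bipRestrictEmbedding r τ A) = (H.connectedComponentMk z).supp) :
    (BipRestrict r τ A).Connected := by
  rw [(bipRestrictEmbedding r τ A).isoInduceRange.connected_iff, hrange]
  exact (H.connectedComponentMk z).connected_toSimpleGraph.mono (comap_monotone _ hH)

namespace IsRealization

variable {f : E → ℕ} {τ : SimpleGraph (V ⊕ E)} {e e' : E}

lemma le (hτ : IsRealization r f τ) : τ ≤ BipGraph r := hτ.1.1

lemma connected (hτ : IsRealization r f τ) : τ.Connected := hτ.1.2.1

lemma isAcyclic (hτ : IsRealization r f τ) : τ.IsAcyclic := hτ.1.2.2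

lemma sum_add_one [Fintype V] [Fintype E] (hτ : IsRealization r f τ) :
    ∑ a, f a + 1 = Fintype.card V := by
  have h := (isTree_iff_connected_and_card.mp ⟨hτ.connected, hτ.isAcyclic⟩).2
  rw [Nat.card_coe_set_eq, (bipGraph_isBipartiteWith.anti hτ.le).ncard_edgeSet_eq_sum_inr,
    Nat.card_sum, Finset.sum_congr rfl fun a _ => hτ.2 a, Finset.sum_add_distrib] at h
  simp only [Finset.sum_const, Finset.card_univ, smul_eq_mul, mul_one,
    Nat.card_eq_fintype_card] at h
  omega

lemma ncard_edgeSet_bipRestrict [Fintype V] (hτ : IsRealization r f τ) (A : Finset E) :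
    (BipRestrict r τ A).edgeSet.ncard = ∑ a ∈ A, f a + A.card := by
  classical
  have hdeg (c : (A : Set E)) : ((BipRestrict r τ A).neighborSet (inr c)).ncard = f c + 1 := by
    rw [(bipRestrictEmbedding r τ A).ncard_neighborSet (inr c) fun z hz => ?_, ← hτ.2 c]
    · rfl
    obtain ⟨v, rfl, hv⟩ := exists_eq_inl_of_bipGraph_adj (hτ.le hz)
    exact inl_mem_range_bipRestrictEmbedding.mpr ⟨c, c.2, hv⟩
  rw [(bipRestrict_isBipartiteWith hτ.le _).ncard_edgeSet_eq_sum_inr,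
    Finset.sum_congr rfl fun c _ => hdeg c, Finset.sum_add_distrib]
  simp [Finset.sum_attach A f]

lemma sum_add_card_connectedComponent_le [Fintype V] (hτ : IsRealization r f τ) (A : Finset E) :
    ∑ a ∈ A, f a + Nat.card (BipRestrict r τ A).ConnectedComponent ≤
      Nat.card {v // ∃ e ∈ (A : Set E), r v e} := by
  have := IsAcyclic.ncard_edgeSet_add_card_connectedComponent_le
    (hτ.isAcyclic.embedding (bipRestrictEmbedding r τ A))
  rw [hτ.ncard_edgeSet_bipRestrict, Nat.card_sum, Nat.card_coe_set_eq,
    Set.ncard_coe_finset] at this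
  omega

lemma sum_le_mu [Fintype V] (hτ : IsRealization r f τ) (A : Finset E) :
    ∑ a ∈ A, f a ≤ mu r A := by
  have h := hτ.sum_add_card_connectedComponent_le A
  have hmono := ConnectedComponent.card_le_card_of_le (bipRestrict_mono (r := r) hτ.le A)
  unfold mu
  omega

lemma tight_of_connected [Fintype V] (hτ : IsRealization r f τ) {A : Finset E}
    (hA : (BipRestrict r τ A).Connected) : Tight r f A := by
  have hle := hτ.sum_le_mu A
  have hcard := hA.card_vert_le_card_edgeSet_add_one
  rw [Nat.card_sum, Nat.card_coe_set_eq, Nat.card_coe_set_eq, Set.ncard_coe_finset,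
    hτ.ncard_edgeSet_bipRestrict] at hcard
  have := hA.nonempty
  have : 0 < Nat.card (BipRestrict r (BipGraph r) A).ConnectedComponent := by
    have : Nonempty (BipRestrict r (BipGraph r) A).ConnectedComponent :=
      ⟨connectedComponentMk _ (Classical.arbitrary _)⟩
    exact Nat.card_pos
  unfold Tight mu at *
  omega

lemma tight_of_tight_transfer [Fintype V] (hτ : IsRealization r f τ) {e a : E} (hea : e ≠ a)
    (hfe : f e ≠ 0) {A : Finset E} (haA : a ∉ A) (hA : Tight r (Transfer f e a) A) :
    e ∉ A ∧ Tight r f A := by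
  classical
  have hle := hτ.sum_le_mu A
  have hsum := sum_transfer_add_ite hea hfe A
  unfold Tight at *
  by_cases heA : e ∈ A <;> simp only [heA, haA, if_true, if_false] at hsum
  · omega
  · exact ⟨heA, by omega⟩

lemma exchange [Finite V] [Finite E] [DecidableEq E] (hτ : IsRealization r f τ) {c : E}
    {y : V ⊕ E} (hcy : τ.Adj (inr c) y) {v : V} {a : E} (hva : r v a)
    (hsep : ¬(τ.deleteEdges {s(inr c, y)}).Reachable (inl v) (inr a)) {g : E → ℕ}
    (hg : ∀ b, g b + (if b = c then 1 else 0) = f b + (if b = a then 1 else 0)) :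
    IsRealization r g (τ.deleteEdges {s(inr c, y)} ⊔ edge (inl v) (inr a)) := by
  classical
  obtain ⟨u, rfl, -⟩ := exists_eq_inl_of_bipGraph_adj (hτ.le hcy)
  refine ⟨⟨sup_le ((deleteEdges_le _).trans hτ.le)
    ((edge_le_iff _).mpr (.inr (bipGraph_adj_inl_inr.mpr hva))),
    hτ.connected.sup_edge_deleteEdges hsep,
    (hτ.isAcyclic.anti (deleteEdges_le _)).sup_edge_of_not_reachable hsep⟩, fun b => ?_⟩
  have hdel := ncard_neighborSet_deleteEdges_add hcy (inr b)
  have hadd := ncard_neighborSet_sup_edge (fun h => hsep h.reachable) inl_ne_inr (inr b)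
  have := hg b
  have := hτ.2 b
  simp only [Sym2.mem_iff, inr.injEq, reduceCtorEq, or_false, false_or] at hdel hadd
  split_ifs at * <;> omega

lemma exists_tight_of_closed [Fintype V] [Fintype E] (hτ : IsRealization r f τ) (hee' : e ≠ e')
    (hclosed : ∀ v a, inr a ∈ τ.branch (inr e) (inr e') → r v a →
      inl v ∈ τ.branch (inr e) (inr e')) :
    ∃ A : Finset E, e' ∈ A ∧ e ∉ A ∧ Tight r f A := by
  classical
  refine ⟨Finset.univ.filter fun a => inr a ∈ τ.branch (inr e) (inr e'), by simp [mem_branch],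
    by simpa using fun h => ne_of_mem_branch h (by simpa using hee'.symm) rfl,
    hτ.tight_of_connected
      (connected_bipRestrict_of_range_eq (deleteIncidenceSet_le τ (inr e)) (inr e') ?_)⟩
  ext (v | a) <;> simp only [inl_mem_range_bipRestrictEmbedding, inr_mem_range_bipRestrictEmbedding,
    ConnectedComponent.mem_supp_iff, ConnectedComponent.eq, Finset.coe_filter, Finset.mem_univ,
    true_and, Set.mem_ofPred_eq, mem_branch]
  · refine ⟨fun ⟨a, ha, hva⟩ => (hclosed v a ha hva).symm, fun h => ?_⟩
    obtain ⟨z, hvz, hze⟩ := h.exists_adj_deleteIncidenceSet inl_ne_inr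
    obtain ⟨a, rfl, hva⟩ :=
      exists_eq_inr_of_bipGraph_adj (hτ.le (deleteIncidenceSet_le τ _ hvz))
    exact ⟨a, (hze.mono (deleteIncidenceSet_le _ _)).symm, hva⟩
  · exact reachable_comm

theorem transfer_or_tight [Fintype V] [Fintype E] (hτ : IsRealization r f τ) (hee' : e ≠ e')
    (hfe : f e ≠ 0) :
    IsHypertree r (Transfer f e e') ∨ ∃ A : Finset E, e' ∈ A ∧ e ∉ A ∧ Tight r f A := by
  classical
  induction hn : (τ.branch (inr e) (inr e')).ncard using Nat.strong_induction_on
    generalizing f τ e with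
  | _ n ih =>
  by_cases hclosed : ∀ v a, inr a ∈ τ.branch (inr e) (inr e') → r v a →
      inl v ∈ τ.branch (inr e) (inr e')
  · exact .inr (hτ.exists_tight_of_closed hee' hclosed)
  push Not at hclosed
  obtain ⟨v, a, ha, hva, hv⟩ := hclosed
  have hae : a ≠ e := by simpa using ne_of_mem_branch ha (by simpa using hee'.symm)
  obtain ⟨x, hex, hxv⟩ :=
    (hτ.connected.preconnected (inr e) (inl v)).exists_adj_deleteIncidenceSet inr_ne_inl
  have hshift := hτ.exchange hex hva
    (hτ.isAcyclic.not_reachable_deleteEdges_at_root hex hxv ha hv)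
    (transfer_add_ite hae.symm hfe)
  by_cases hae' : a = e'
  · exact .inl ⟨_, hae' ▸ hshift⟩
  by_cases hsplit : (τ.deleteIncidenceSet (inr a)).Reachable (inr e') (inr e)
  · obtain ⟨w, haw, hwe⟩ :=
      (hτ.connected.preconnected (inr a) (inr e)).exists_adj_deleteIncidenceSet
        (by simpa using hae)
    have hswap := hτ.exchange (g := f) haw hva
      (hτ.isAcyclic.not_reachable_deleteEdges_toward_root haw hwe ha hv) fun _ => rfl
    exact ih _ (hn ▸ Set.ncard_lt_ncard (branch_swap_ssubset hτ.isAcyclic haw hwe hsplit ha hv))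
      hswap hee' hfe rfl
  rcases ih _ (hn ▸ Set.ncard_lt_ncard (branch_shift_ssubset
      (sup_le_sup_right (deleteEdges_le _) _) hsplit ha (by simpa using hae'))) hshift hae'
      (by simp [transfer_apply_right hae]) rfl with h | ⟨A, he'A, haA, hA⟩
  · exact .inl (transfer_transfer hae.symm hae' hee' ▸ h)
  · exact .inr ⟨A, he'A, hτ.tight_of_tight_transfer hae.symm hfe haA hA⟩

end IsRealization

end Realization

theorem internally_inactive_iff_general {V E : Type*} [Fintype V] [Fintype E] [LinearOrder E]
    (r : V → E → Prop) (f : E → ℕ) (hf : IsHypertree r f)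
    (e : E) :
    (∃ e', e' < e ∧ IsHypertree r (Transfer f e e')) ↔
      (f e ≠ 0 ∧ ∃ e', e' < e ∧ ∀ E' : Finset E, e' ∈ E' → e ∉ E' → ¬ Tight r f E') := by
  classical
  obtain ⟨τ, hτ⟩ := isHypertree_iff.mp hf
  constructor
  · rintro ⟨e', he', hg⟩
    obtain ⟨τ', hτ'⟩ := isHypertree_iff.mp hg
    have hfe : f e ≠ 0 := fun h0 => by
      have := sum_lt_sum_transfer he'.ne' h0
      have := hτ.sum_add_one
      have := hτ'.sum_add_one
      omega
    refine ⟨hfe, e', he', fun A he'A heA hA => ?_⟩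
    have := hτ'.sum_le_mu A
    have := sum_transfer_add_ite he'.ne' hfe A
    simp only [he'A, heA, if_true, if_false] at this
    unfold Tight at hA
    omega
  · rintro ⟨hfe, e', he', hA⟩
    rcases hτ.transfer_or_tight he'.ne' hfe with h | ⟨A, he'A, heA, htight⟩
    · exact ⟨e', he', h⟩
    · exact absurd htight (hA A he'A heA)

/-- `e` is internally inactive w.r.t. `f` iff `f e ≠ 0` and there is `e' < e`
such that every subset containing `e'` but not `e` is not tight at `f`. -/
theorem internally_inactive_iff {V E : Type*} [Fintype V] [Fintype E] [LinearOrder E]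
    (r : V → E → Prop) (hconn : (BipGraph r).Connected) (f : E → ℕ) (hf : IsHypertree r f)
    (e : E) :
    (∃ e', e' < e ∧ IsHypertree r (Transfer f e e')) ↔
      (f e ≠ 0 ∧ ∃ e', e' < e ∧ ∀ E' : Finset E, e' ∈ E' → e ∉ E' → ¬ Tight r f E') :=
  internally_inactive_iff_general r f hf e
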